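/- With c_0 = (1 + (sqrt(2) - 1)*i)/4, c_1 = (1 - (sqrt(2) + 1)*i)/4, c_2 = ((1 + sqrt(2)) + i)/4, c_3 = ((1 - sqrt(2)) + i)/4 and p_3(s) = c_0*s_0 + c_1*s_1 + c_2*s_2 + c_3*s_0*s_1*s_2, for every s = (s_0, s_1, s_2) in {-1,1}^3 one has |p_3(s)| = 1; equivalently, (Re p_3(s))^2 + (Im p_3(s))^2 = 1. -/

import Mathlib

noncomputable def p3 (s : Fin 3 → ℝ) : ℂ :=
  ((1 + (Real.sqrt 2 - 1) * Complex.I) / 4) * (s 0)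
    + ((1 - (Real.sqrt 2 + 1) * Complex.I) / 4) * (s 1)
    + (((1 + Real.sqrt 2) + Complex.I) / 4) * (s 2)
    + (((1 - Real.sqrt 2) + Complex.I) / 4) * ((s 0) * (s 1) * (s 2))

/-!
Since `s_j ^ 2 = 1`, expanding `|c₀ s₀ + c₁ s₁ + c₂ s₂ + c₃ s₀ s₁ s₂|²` leaves the constant
`∑ |c_j|²` plus the three monomials `s_j s_k`, each with coefficient `2 Re` of a sum of two
products `c_l * conj c_m`. For the coefficients of `p₃` the constant is `(2 + √2 ^ 2) / 4`, the
coefficient of `s₀ s₁` is `(2 - √2 ^ 2) / 4`, and the other two vanish identically, so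
`|p₃(s)|² - 1 = (√2 ^ 2 - 2) (1 - s₀ s₁) / 4 = 0`.
-/

open Complex ComplexConjugate

theorem Complex.normSq_multilinear_of_sq_eq_one (a b c d : ℂ) {x y z : ℝ}
    (hx : x ^ 2 = 1) (hy : y ^ 2 = 1) (hz : z ^ 2 = 1) :
    normSq (a * x + b * y + c * z + d * (x * y * z)) =
      normSq a + normSq b + normSq c + normSq d
        + 2 * ((a * conj b + c * conj d).re * (x * y) + (a * conj c + b * conj d).re * (x * z)
          + (b * conj c + a * conj d).re * (y * z)) := by
  simp only [normSq_apply, add_re, add_im, mul_re, mul_im, ofReal_re, ofReal_im, conj_re, conj_im]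
  linear_combination
    (a.re ^ 2 + a.im ^ 2 + (d.re ^ 2 + d.im ^ 2) * y ^ 2 * z ^ 2
      + 2 * (a.re * d.re + a.im * d.im) * (y * z)) * hx
    + (b.re ^ 2 + b.im ^ 2 + (d.re ^ 2 + d.im ^ 2) * z ^ 2
      + 2 * (b.re * d.re + b.im * d.im) * (x * z)) * hy
    + (c.re ^ 2 + c.im ^ 2 + d.re ^ 2 + d.im ^ 2
      + 2 * (c.re * d.re + c.im * d.im) * (x * y)) * hz

theorem normSq_p3 {s : Fin 3 → ℝ} (hs : ∀ i, s i ^ 2 = 1) : normSq (p3 s) = 1 := by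
  have hsqrt : √2 ^ 2 = 2 := Real.sq_sqrt zero_le_two
  rw [p3, normSq_multilinear_of_sq_eq_one _ _ _ _ (hs 0) (hs 1) (hs 2)]
  simp only [normSq_apply, add_re, add_im, sub_re, sub_im, mul_re, mul_im, ofReal_re, ofReal_im,
    conj_re, conj_im, div_ofNat_re, div_ofNat_im, one_re, one_im, I_re, I_im]
  linear_combination (1 - s 0 * s 1) / 4 * hsqrt

/-- The `n = 3` phase encoding polynomial has unit modulus on the sign cube:
`|p₃(s)| = 1`, equivalently `(Re p₃(s))² + (Im p₃(s))² = 1`. -/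
theorem p3_unit_modulus (s : Fin 3 → ℝ) (hs : ∀ i, s i = 1 ∨ s i = -1) :
    ‖p3 s‖ = 1 ∧ (p3 s).re ^ 2 + (p3 s).im ^ 2 = 1 := by
  have hsq : ∀ i, s i ^ 2 = 1 := fun i => by rcases hs i with h | h <;> simp [h]
  have hnormSq : normSq (p3 s) = 1 := normSq_p3 hsq
  constructor
  · rw [norm_def, hnormSq, Real.sqrt_one]
  · rw [sq, sq, ← normSq_apply, hnormSq]
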